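/- arXiv:2203.15769 — 2 statements merged into one kernel-verified Lean document; each statement's English description precedes it below -/
import Mathlib

section
/- Let f be a differentiable concave function on an open convex cone Γ ⊆ ℝⁿ. The following are equivalent: (i) lim_{t→+∞} f(tλ) > f(μ) for all λ, μ ∈ Γ; (ii) ∑_{i=1}^n f_i(λ)μ_i > 0 for all λ, μ ∈ Γ; (iii) f(λ + μ) > f(λ) for all λ, μ ∈ Γ. -/
open Finset Filter Topology

/-- The i-th partial derivative `f_i(x) = ∂f/∂x_i (x)`. -/
noncomputable def pd {n : ℕ} (f : (Fin n → ℝ) → ℝ) (x : Fin n → ℝ) (i : Fin n) : ℝ :=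
  fderiv ℝ f x (Pi.single i 1)

/-- The set of values `t_λ = (∑ f_i(λ) λ_i)/(∑ f_j(λ))` over the level set `∂Γ^σ`. -/
def tset {n : ℕ} (Γ : Set (Fin n → ℝ)) (f : (Fin n → ℝ) → ℝ) (σ : ℝ) : Set ℝ :=
  {t : ℝ | ∃ x ∈ Γ, f x = σ ∧ t = (∑ i, pd f x i * x i) / (∑ i, pd f x i)}

/-- The cone `Γ_{σ,f} = { t (λ - τ 𝟏) : λ ∈ ∂Γ^σ, t > 0 }`. -/
def lcone {n : ℕ} (Γ : Set (Fin n → ℝ)) (f : (Fin n → ℝ) → ℝ) (σ τ : ℝ) :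
    Set (Fin n → ℝ) :=
  {y | ∃ x ∈ Γ, f x = σ ∧ ∃ t : ℝ, 0 < t ∧ y = t • (x - fun _ => τ)}

/-- The set of `k` such that some vector with the first `k` coordinates negative and
the remaining coordinates positive belongs to `C`; `κ_C` is its greatest element. -/
def kset {n : ℕ} (C : Set (Fin n → ℝ)) : Set ℕ :=
  {k : ℕ | ∃ α : Fin n → ℝ, (∀ i, 0 < α i) ∧
    (fun i : Fin n => if (i : ℕ) < k then -α i else α i) ∈ C}

/-- The sum `∑ f_i(x) v_i` equals the differential applied to `v`. -/
lemma sum_pd_eq {n : ℕ} (f : (Fin n → ℝ) → ℝ) (x v : Fin n → ℝ) :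
    ∑ i, pd f x i * v i = fderiv ℝ f x v := by
  have hv : v = ∑ i, Pi.single i (v i) := (Finset.univ_sum_single v).symm
  calc ∑ i, pd f x i * v i = ∑ i, fderiv ℝ f x (Pi.single i (v i)) := by
        refine Finset.sum_congr rfl fun i _ => ?_
        have : Pi.single i (v i) = v i • (Pi.single i (1:ℝ) : Fin n → ℝ) := by
          funext j; by_cases h : j = i <;> simp [Pi.single_apply, h]
        rw [this, map_smul, pd, smul_eq_mul, mul_comm]
      _ = fderiv ℝ f x v := by rw [← map_sum, ← hv]

/-- Gradient inequality for concave differentiable functions. -/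
lemma grad_ineq {n : ℕ} {Γ : Set (Fin n → ℝ)} {f : (Fin n → ℝ) → ℝ}
    (hconc : ConcaveOn ℝ Γ f) (hdiff : ∀ x ∈ Γ, DifferentiableAt ℝ f x)
    {x y : Fin n → ℝ} (hx : x ∈ Γ) (hy : y ∈ Γ) :
    f y - f x ≤ fderiv ℝ f x (y - x) := by
  set c : ℝ →ᵃ[ℝ] (Fin n → ℝ) := AffineMap.lineMap x y with hc
  have hg : ConcaveOn ℝ (c ⁻¹' Γ) (f ∘ c) := hconc.comp_affineMap c
  have hc0 : c 0 = x := AffineMap.lineMap_apply_zero x y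
  have hc1 : c 1 = y := AffineMap.lineMap_apply_one x y
  have hcd : HasDerivAt (fun t : ℝ => c t) (y - x) 0 := by
    have : (fun t : ℝ => c t) = fun t : ℝ => t • (y - x) + x := by
      funext t; exact AffineMap.lineMap_apply_module' x y t
    rw [this]
    simpa using ((hasDerivAt_id (0:ℝ)).smul_const (y - x)).add_const x
  have hfd : HasDerivAt (f ∘ c) (fderiv ℝ f x (y - x)) 0 := by
    refine HasFDerivAt.comp_hasDerivAt 0 ?_ hcd
    rw [hc0]; exact (hdiff x hx).hasFDerivAt
  have h0 : (0:ℝ) ∈ c ⁻¹' Γ := by simp [Set.mem_preimage, hc0, hx]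
  have h1 : (1:ℝ) ∈ c ⁻¹' Γ := by simp [Set.mem_preimage, hc1, hy]
  have := hg.slope_le_of_hasDerivAt h0 h1 zero_lt_one hfd
  rw [slope_def_field] at this
  simp only [Function.comp_apply, hc0, hc1] at this
  linarith [this]

theorem stmt8 {n : ℕ} (Γ : Set (Fin n → ℝ)) (f : (Fin n → ℝ) → ℝ)
    (hopen : IsOpen Γ) (hconv : Convex ℝ Γ)
    (hcone : ∀ x ∈ Γ, ∀ t : ℝ, 0 < t → t • x ∈ Γ)
    (hconc : ConcaveOn ℝ Γ f)
    (hdiff : ∀ x ∈ Γ, DifferentiableAt ℝ f x) :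
    ((∀ lam ∈ Γ, ∀ μ ∈ Γ, ∀ᶠ t : ℝ in atTop, f μ < f (t • lam)) ↔
      (∀ lam ∈ Γ, ∀ μ ∈ Γ, 0 < ∑ i, pd f lam i * μ i)) ∧
    ((∀ lam ∈ Γ, ∀ μ ∈ Γ, 0 < ∑ i, pd f lam i * μ i) ↔
      (∀ lam ∈ Γ, ∀ μ ∈ Γ, f lam < f (lam + μ))) := by
  -- addition closure
  have hadd : ∀ x ∈ Γ, ∀ y ∈ Γ, x + y ∈ Γ := by
    intro x hx y hy
    have hm : (1/2:ℝ) • x + (1/2:ℝ) • y ∈ Γ :=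
      hconv hx hy (by norm_num) (by norm_num) (by norm_num)
    have := hcone _ hm 2 two_pos
    have heq : (2:ℝ) • ((1/2:ℝ) • x + (1/2:ℝ) • y) = x + y := by module
    rwa [heq] at this
  have gi : ∀ x ∈ Γ, ∀ y ∈ Γ, f y - f x ≤ fderiv ℝ f x (y - x) :=
    fun x hx y hy => grad_ineq hconc hdiff hx hy
  constructor
  · constructor
    · -- (i) → (ii)
      intro h lam hlam μ hμ
      rw [sum_pd_eq]
      -- first: 0 < fderiv f lam lam
      have hself : 0 < fderiv ℝ f lam lam := by
        obtain ⟨t, ht, ht1⟩ := ((h lam hlam lam hlam).and (eventually_gt_atTop 1)).exists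
        have htΓ : t • lam ∈ Γ := hcone _ hlam t (by linarith)
        have := gi _ hlam _ htΓ
        have heq : fderiv ℝ f lam (t • lam - lam) = (t - 1) * fderiv ℝ f lam lam := by
          rw [show t • lam - lam = (t - 1) • lam by module, map_smul, smul_eq_mul]
        rw [heq] at this
        nlinarith
      by_contra hle
      push_neg at hle
      obtain ⟨t, ht, ht0⟩ := ((h μ hμ lam hlam).and (eventually_gt_atTop 0)).exists
      have htΓ : t • μ ∈ Γ := hcone _ hμ t ht0
      have := gi _ hlam _ htΓ
      have heq : fderiv ℝ f lam (t • μ - lam) =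
          t * fderiv ℝ f lam μ - fderiv ℝ f lam lam := by
        rw [show t • μ - lam = t • μ - (1:ℝ) • lam by module, map_sub, map_smul, map_smul]
        simp [smul_eq_mul]
      rw [heq] at this
      nlinarith
    · -- (ii) → (i)
      intro h lam hlam μ hμ
      have htend : Tendsto (fun t : ℝ => lam - t⁻¹ • μ) atTop (𝓝 lam) := by
        have : Tendsto (fun t : ℝ => t⁻¹ • μ) atTop (𝓝 ((0:ℝ) • μ)) :=
          tendsto_inv_atTop_zero.smul_const μ
        simpa using tendsto_const_nhds.sub this
      have hmem : ∀ᶠ t : ℝ in atTop, lam - t⁻¹ • μ ∈ Γ :=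
        htend.eventually (hopen.mem_nhds hlam)
      filter_upwards [hmem, eventually_gt_atTop 0] with t hw ht0
      have hsub : t • lam - μ ∈ Γ := by
        have := hcone _ hw t ht0
        have heq : t • (lam - t⁻¹ • μ) = t • lam - μ := by
          rw [smul_sub, smul_smul, mul_inv_cancel₀ (ne_of_gt ht0), one_smul]
        rwa [heq] at this
      have htΓ : t • lam ∈ Γ := hcone _ hlam t ht0
      have hgi := gi _ htΓ _ hμ
      have hpos := h (t • lam) htΓ (t • lam - μ) hsub
      rw [sum_pd_eq] at hpos
      have : fderiv ℝ f (t • lam) (μ - t • lam) =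
          - fderiv ℝ f (t • lam) (t • lam - μ) := by
        rw [← map_neg]; congr 1; abel
      rw [this] at hgi
      linarith
  · constructor
    · -- (ii) → (iii)
      intro h lam hlam μ hμ
      have hsum : lam + μ ∈ Γ := hadd _ hlam _ hμ
      have hgi := gi _ hsum _ hlam
      have hpos := h (lam + μ) hsum μ hμ
      rw [sum_pd_eq] at hpos
      have : fderiv ℝ f (lam + μ) (lam - (lam + μ)) =
          - fderiv ℝ f (lam + μ) μ := by
        rw [← map_neg]; congr 1; abel
      rw [this] at hgi
      linarith
    · -- (iii) → (ii)
      intro h lam hlam μ hμ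
      rw [sum_pd_eq]
      have hsum : lam + μ ∈ Γ := hadd _ hlam _ hμ
      have hgi := gi _ hlam _ hsum
      have heq : lam + μ - lam = μ := by abel
      rw [heq] at hgi
      have := h lam hlam μ hμ
      linarith
end

section
/- Let f be a differentiable concave function on an open convex cone Γ ⊆ ℝⁿ with f > 0 on Γ and f → 0 on ∂Γ (i.e., f(λ) → 0 as λ → any boundary point). Then f_i(λ) ≥ 0 for all i and ∑_{i=1}^n f_i(λ)λ_i ≥ 0 for all λ ∈ Γ. -/
open Finset Filter Topology

/-!
Along a ray `t ↦ x + t • v` inside `Γ`, `f` restricts to a concave function of one variable that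
is bounded below (by `0`). A concave function lies below its tangent lines, so its derivative at
the start of the ray cannot be negative: `f'(x) v ≥ 0`. The rays `λ + t eᵢ` and `λ + t λ` stay
in `Γ` because `Γ` is an open convex cone containing the positive orthant.
-/

theorem ConcaveOn.hasDerivAt_nonneg_of_bddBelow {g : ℝ → ℝ} {c : ℝ}
    (hg : ConcaveOn ℝ (Set.Ici 0) g) (hbdd : BddBelow (g '' Set.Ici 0)) (hc : HasDerivAt g c 0) :
    0 ≤ c := by
  by_contra! hneg
  obtain ⟨m, hm⟩ := hbdd
  have hm0 : m ≤ g 0 := hm ⟨0, Set.self_mem_Ici, rfl⟩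
  -- the tangent line at `0` drops to `m - 1` at this `t`
  set t := (g 0 - m + 1) / -c
  have ht : 0 < t := div_pos (by linarith) (by linarith)
  have hmt : m ≤ g t := hm ⟨t, ht.le, rfl⟩
  have hslope : slope g 0 t ≤ c := hg.slope_le_of_hasDerivAt Set.self_mem_Ici ht.le ht hc
  have htc : t * -c = g 0 - m + 1 := div_mul_cancel₀ _ (by linarith)
  rw [slope_def_field, sub_zero, div_le_iff₀ ht] at hslope
  linarith

theorem ConcaveOn.fderiv_apply_nonneg_of_bddBelow {E : Type*} [NormedAddCommGroup E]
    [NormedSpace ℝ E] {s : Set E} {f : E → ℝ} {f' : E →L[ℝ] ℝ} {x v : E}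
    (hf : ConcaveOn ℝ s f) (hbdd : BddBelow (f '' s)) (hray : ∀ t : ℝ, 0 ≤ t → x + t • v ∈ s)
    (hf' : HasFDerivAt f f' x) :
    0 ≤ f' v := by
  have hline : ∀ t : ℝ, AffineMap.lineMap x (x + v) t = x + t • v := fun t => by
    rw [AffineMap.lineMap_apply_module', add_sub_cancel_left, add_comm]
  have hIci : Set.Ici (0 : ℝ) ⊆ AffineMap.lineMap x (x + v) ⁻¹' s := fun t ht => by
    simpa [hline] using hray t ht
  refine ConcaveOn.hasDerivAt_nonneg_of_bddBelow
    ((hf.comp_affineMap _).subset hIci (convex_Ici 0))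
    (hbdd.mono ?_) ?_
  · rintro _ ⟨t, ht, rfl⟩
    exact ⟨_, hIci ht, rfl⟩
  · have hd := AffineMap.hasDerivAt_lineMap (a := x) (b := x + v) (x := (0 : ℝ))
    rw [add_sub_cancel_left] at hd
    have hf'0 : HasFDerivAt f f' (AffineMap.lineMap x (x + v) (0 : ℝ)) := by
      simpa [hline] using hf'
    exact hf'0.comp_hasDerivAt (0 : ℝ) hd

theorem Convex.add_mem_of_smul_mem {E : Type*} [AddCommGroup E] [Module ℝ E] {s : Set E}
    (hs : Convex ℝ s) (hcone : ∀ x ∈ s, ∀ t : ℝ, 0 < t → t • x ∈ s) {x y : E}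
    (hx : x ∈ s) (hy : y ∈ s) :
    x + y ∈ s := by
  have hmid := hs hx hy (by norm_num : (0 : ℝ) ≤ 1 / 2) (by norm_num) (add_halves 1)
  convert hcone _ hmid 2 two_pos using 1
  module

theorem add_mem_of_nonneg_of_isOpen {n : ℕ} {Γ : Set (Fin n → ℝ)} (hopen : IsOpen Γ)
    (hconv : Convex ℝ Γ) (hcone : ∀ x ∈ Γ, ∀ t : ℝ, 0 < t → t • x ∈ Γ)
    (horth : {x : Fin n → ℝ | ∀ i, 0 < x i} ⊆ Γ) {x w : Fin n → ℝ} (hx : x ∈ Γ) (hw : 0 ≤ w) :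
    x + w ∈ Γ := by
  have hlim : Tendsto (fun ε : ℝ => x - ε • (1 : Fin n → ℝ)) (𝓝[>] 0) (𝓝 x) := by
    have hcont : Continuous fun ε : ℝ => x - ε • (1 : Fin n → ℝ) := by fun_prop
    simpa using (hcont.tendsto 0).mono_left nhdsWithin_le_nhds
  obtain ⟨ε, hεΓ, hε⟩ :=
    ((hlim.eventually (hopen.mem_nhds hx)).and self_mem_nhdsWithin).exists
  have hshift : ε • (1 : Fin n → ℝ) + w ∈ Γ := horth fun i => by
    simpa using add_pos_of_pos_of_nonneg hε (hw i)
  convert hconv.add_mem_of_smul_mem hcone hεΓ hshift using 1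
  abel

theorem fderiv_apply_eq_sum_pd {n : ℕ} (f : (Fin n → ℝ) → ℝ) (x v : Fin n → ℝ) :
    fderiv ℝ f x v = ∑ i, pd f x i * v i := by
  conv_lhs => rw [pi_eq_sum_univ' v]
  simp [map_sum, pd, mul_comm]

theorem stmt14_general {n : ℕ} (Γ : Set (Fin n → ℝ)) (f : (Fin n → ℝ) → ℝ)
    (hopen : IsOpen Γ) (hconv : Convex ℝ Γ)
    (hcone : ∀ x ∈ Γ, ∀ t : ℝ, 0 < t → t • x ∈ Γ)
    (horth : {x : Fin n → ℝ | ∀ i, 0 < x i} ⊆ Γ)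
    (hconc : ConcaveOn ℝ Γ f)
    (hdiff : ∀ x ∈ Γ, DifferentiableAt ℝ f x)
    (hpos : ∀ x ∈ Γ, 0 < f x) :
    ∀ lam ∈ Γ, (∀ i : Fin n, 0 ≤ pd f lam i) ∧ 0 ≤ ∑ i, pd f lam i * lam i := by
  intro lam hlam
  have hbdd : BddBelow (f '' Γ) := ⟨0, by rintro _ ⟨x, hx, rfl⟩; exact (hpos x hx).le⟩
  have hf' := (hdiff lam hlam).hasFDerivAt
  refine ⟨fun i => hconc.fderiv_apply_nonneg_of_bddBelow hbdd (fun t ht => ?_) hf', ?_⟩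
  · refine add_mem_of_nonneg_of_isOpen hopen hconv hcone horth hlam (smul_nonneg ht ?_)
    exact Pi.single_nonneg.mpr zero_le_one
  · rw [← fderiv_apply_eq_sum_pd]
    refine hconc.fderiv_apply_nonneg_of_bddBelow hbdd (fun t ht => ?_) hf'
    simpa [add_smul, one_smul] using hcone lam hlam (1 + t) (by linarith)

theorem stmt14 {n : ℕ} (Γ : Set (Fin n → ℝ)) (f : (Fin n → ℝ) → ℝ)
    (hopen : IsOpen Γ) (hconv : Convex ℝ Γ)
    (hcone : ∀ x ∈ Γ, ∀ t : ℝ, 0 < t → t • x ∈ Γ)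
    (horth : {x : Fin n → ℝ | ∀ i, 0 < x i} ⊆ Γ)
    (hbdry : (frontier Γ).Nonempty)
    (hconc : ConcaveOn ℝ Γ f)
    (hdiff : ∀ x ∈ Γ, DifferentiableAt ℝ f x)
    (hpos : ∀ x ∈ Γ, 0 < f x)
    (hzero : ∀ x ∈ frontier Γ, Filter.Tendsto f (𝓝[Γ] x) (𝓝 0)) :
    ∀ lam ∈ Γ, (∀ i : Fin n, 0 ≤ pd f lam i) ∧ 0 ≤ ∑ i, pd f lam i * lam i :=
  stmt14_general Γ f hopen hconv hcone horth hconc hdiff hpos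
end
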